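/- arXiv:1103.3034 — 2 statements merged into one kernel-verified Lean document; each statement's English description precedes it below -/
import Mathlib

section
/- Let m be a natural number and let S be an abstract simplicial complex on the vertex set Fin m. For each i in Fin m let A_i be a finite type and let B_i be a (finite) subset of A_i. Let Z be the polyhedral product, i.e. the set of all x in the product ∏_{i} A_i such that the support {i | x_i ∉ B_i} belongs to S. Then the cardinality of Z equals ∑_{J ∈ S} (∏_{j ∈ J} (|A_j| − |B_j|)) · (∏_{i ∈ Fin m, i ∉ J} |B_i|). (This is the combinatorial/counting form of the paper's Theorem, where the Euler characteristic of a finite discrete space is its cardinality.) -/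
/-! The polyhedral product is the disjoint union, over `J ∈ S`, of the points whose support is
exactly `J`, and that fibre is the box `∏_{j ∈ J} (A j \ B j) × ∏_{i ∉ J} B i`. -/

open Finset

namespace PolyhedralProduct

variable {ι : Type*} [Fintype ι] [DecidableEq ι] {A : ι → Type*} [∀ i, Fintype (A i)]
  [∀ i, DecidableEq (A i)]

/-- The paper's `Supp(x)`. -/
def support (B : ∀ i, Finset (A i)) (x : ∀ i, A i) : Finset ι :=
  univ.filter fun i => x i ∉ B i

theorem support_eq_iff {B : ∀ i, Finset (A i)} {x : ∀ i, A i} {J : Finset ι} :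
    support B x = J ↔ x ∈ Fintype.piFinset fun i => if i ∈ J then (B i)ᶜ else B i := by
  simp only [Finset.ext_iff, support, mem_filter, mem_univ, true_and, Fintype.mem_piFinset]
  refine forall_congr' fun i => ?_
  by_cases hi : i ∈ J <;> simp [hi]

theorem filter_support_eq (B : ∀ i, Finset (A i)) (J : Finset ι) :
    univ.filter (fun x => support B x = J) =
      Fintype.piFinset fun i => if i ∈ J then (B i)ᶜ else B i := by
  ext x
  simp only [mem_filter, mem_univ, true_and, support_eq_iff]

theorem card_filter_support_eq (B : ∀ i, Finset (A i)) (J : Finset ι) :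
    #(univ.filter fun x => support B x = J) =
      (∏ j ∈ J, (Fintype.card (A j) - #(B j))) * ∏ i ∈ Jᶜ, #(B i) := by
  rw [filter_support_eq, Fintype.card_piFinset, ← prod_mul_prod_compl J]
  congr 1
  · exact prod_congr rfl fun j hj => by simp [hj, card_compl]
  · exact prod_congr rfl fun i hi => by simp [mem_compl.mp hi]

theorem card_support_mem (B : ∀ i, Finset (A i)) (S : Finset (Finset ι)) :
    Fintype.card {x // support B x ∈ S} =
      ∑ J ∈ S, (∏ j ∈ J, (Fintype.card (A j) - #(B j))) * ∏ i ∈ Jᶜ, #(B i) := by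
  rw [Fintype.card_subtype, card_eq_sum_card_fiberwise (s := univ.filter fun x => support B x ∈ S)
    (f := support B) (t := S) fun x hx => (mem_filter.mp hx).2]
  refine sum_congr rfl fun J hJ => ?_
  rw [← card_filter_support_eq B J, filter_filter]
  congr 1
  ext x
  simp only [mem_filter, mem_univ, true_and, and_iff_right_iff_imp]
  rintro rfl
  exact hJ

end PolyhedralProduct

theorem euler_char_polyhedral_product_card_general
    (m : ℕ) (S : Finset (Finset (Fin m)))
    (A : Fin m → Type) [∀ i, Fintype (A i)] [∀ i, DecidableEq (A i)]
    (B : ∀ i, Finset (A i)) :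
    Fintype.card {x : ∀ i, A i // Finset.univ.filter (fun i => x i ∉ B i) ∈ S}
      = ∑ J ∈ S, (∏ j ∈ J, (Fintype.card (A j) - (B j).card)) *
          ∏ i ∈ Jᶜ, (B i).card :=
  PolyhedralProduct.card_support_mem B S

/-- The counting form of the Theorem: the cardinality of the polyhedral product
`Z_S(A,B) = {x ∈ ∏ i, A i | {i | x i ∉ B i} ∈ S}` equals
`∑_{J ∈ S} (∏_{j ∈ J} (|A j| - |B j|)) * (∏_{i ∉ J} |B i|)`. -/
theorem euler_char_polyhedral_product_card
    (m : ℕ) (S : Finset (Finset (Fin m)))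
    (hS_down : ∀ J ∈ S, ∀ I ⊆ J, I ∈ S) (hS_empty : ∅ ∈ S)
    (A : Fin m → Type) [∀ i, Fintype (A i)] [∀ i, DecidableEq (A i)]
    (B : ∀ i, Finset (A i)) :
    Fintype.card {x : ∀ i, A i // Finset.univ.filter (fun i => x i ∉ B i) ∈ S}
      = ∑ J ∈ S, (∏ j ∈ J, (Fintype.card (A j) - (B j).card)) *
          ∏ i ∈ Jᶜ, (B i).card :=
  euler_char_polyhedral_product_card_general m S A B
end

section
/- Let m be a natural number and S an abstract simplicial complex on Fin m. For each i in Fin m let A_i be a nonempty finite type and let B_i = {*_i} be a one-point subset of A_i. Let Z be the polyhedral product, i.e. the set of x ∈ ∏_i A_i with {i | x_i ≠ *_i} ∈ S. Then |Z| = ∑_{J ∈ S} ∏_{j ∈ J} (|A_j| − 1); equivalently, |Z| equals the multivariable f-polynomial of S evaluated at the reduced cardinalities (|A_i| − 1)_{i ∈ Fin m}. (This is the counting form of Corollary 1 of the paper, where each pair (A_i, B_i) has B_i a point.) -/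
/-!
A point of the product with support exactly `J` is free to take any non-basepoint value on
each coordinate of `J` and is pinned to the basepoint elsewhere, so there are
`∏ j ∈ J, (|A j| - 1)` of them; summing over the supports `J ∈ S` counts the polyhedral product.
-/

open Finset

section
variable {ι : Type*} [Fintype ι] [DecidableEq ι] {A : ι → Type*} [∀ i, Fintype (A i)]
  [∀ i, DecidableEq (A i)]

theorem filter_support_eq_eq_piFinset (p : ∀ i, A i) (J : Finset ι) :
    univ.filter (fun x : ∀ i, A i => univ.filter (fun i => x i ≠ p i) = J) =
      Fintype.piFinset fun i => if i ∈ J then univ.erase (p i) else {p i} := by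
  ext x
  simp only [mem_filter, mem_univ, true_and, Fintype.mem_piFinset, Finset.ext_iff]
  refine forall_congr' fun i => ?_
  split_ifs with hi <;> simp [hi]

theorem card_filter_support_eq (p : ∀ i, A i) (J : Finset ι) :
    #(univ.filter fun x : ∀ i, A i => univ.filter (fun i => x i ≠ p i) = J) =
      ∏ j ∈ J, (Fintype.card (A j) - 1) := by
  rw [filter_support_eq_eq_piFinset, Fintype.card_piFinset]
  simp only [apply_ite Finset.card, card_erase_of_mem (mem_univ _), card_univ, card_singleton]
  rw [prod_ite_mem, univ_inter]

end

theorem card_polyhedral_product_basepoints_general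
    (m : ℕ) (S : Finset (Finset (Fin m)))
    (A : Fin m → Type) [∀ i, Fintype (A i)] [∀ i, DecidableEq (A i)]
    (p : ∀ i, A i) :
    Fintype.card {x : ∀ i, A i // Finset.univ.filter (fun i => x i ≠ p i) ∈ S}
      = ∑ J ∈ S, ∏ j ∈ J, (Fintype.card (A j) - 1) := by
  rw [Fintype.card_subtype, card_eq_sum_card_fiberwise (t := S)
    (f := fun x => univ.filter fun i => x i ≠ p i) fun x hx => by simpa using hx]
  refine sum_congr rfl fun J hJ => ?_
  rw [filter_filter, ← card_filter_support_eq p J]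
  congr 1
  exact filter_congr fun x _ => and_iff_right_of_imp fun hx => hx ▸ hJ

/-- Counting form of Corollary 1: if each `B i` is a single basepoint `p i`, then the
cardinality of the polyhedral product is `∑_{J ∈ S} ∏_{j ∈ J} (|A j| - 1)`, i.e.
the f-polynomial of `S` evaluated at the reduced cardinalities. -/
theorem card_polyhedral_product_basepoints
    (m : ℕ) (S : Finset (Finset (Fin m)))
    (hS_down : ∀ J ∈ S, ∀ I ⊆ J, I ∈ S) (hS_empty : ∅ ∈ S)
    (A : Fin m → Type) [∀ i, Fintype (A i)] [∀ i, DecidableEq (A i)]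
    (p : ∀ i, A i) :
    Fintype.card {x : ∀ i, A i // Finset.univ.filter (fun i => x i ≠ p i) ∈ S}
      = ∑ J ∈ S, ∏ j ∈ J, (Fintype.card (A j) - 1) :=
  card_polyhedral_product_basepoints_general m S A p
end
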